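/- For every integer s ≥ 0, the space (ℙ_s)² of ℝ²-valued polynomial vector fields of degree ≤ s decomposes as the direct sum of grad(ℙ_{s+1}) and x^⊥·ℙ_{s-1} := {x ↦ p(x)·(-x₂, x₁) : p ∈ ℙ_{s-1}}, where ℙ_{-1} = {0}. -/

import Mathlib

open MvPolynomial

noncomputable section

abbrev P2 := MvPolynomial (Fin 2) ℝ

/-- `ℙ_n`, polynomials of total degree ≤ n, with `ℙ_n = {0}` for `n < 0`. -/
def Pdeg2 (n : ℤ) : Submodule ℝ P2 :=
  if n < 0 then ⊥ else restrictTotalDegree (Fin 2) ℝ n.toNat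

/-- `(ℙ_s)²`. -/
def Ps2vec (s : ℕ) : Submodule ℝ (Fin 2 → P2) :=
  Submodule.pi Set.univ (fun _ => Pdeg2 s)

def pd2 (i : Fin 2) : P2 →ₗ[ℝ] P2 := (pderiv i : Derivation ℝ P2 P2).toLinearMap

/-- `grad q = (∂q/∂x₁, ∂q/∂x₂)` as a linear map. -/
def gradLM : P2 →ₗ[ℝ] (Fin 2 → P2) := LinearMap.pi ![pd2 0, pd2 1]

/-- `p ↦ (x ↦ p(x)·x^⊥)` with `x^⊥ = (-x₂, x₁)`, as a linear map. -/
def xPerpMulLM : P2 →ₗ[ℝ] (Fin 2 → P2) :=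
  LinearMap.pi ![-(LinearMap.mulLeft ℝ (X 1 : P2)), LinearMap.mulLeft ℝ (X 0)]

/-!
Write `x · v = X₀ v₀ + X₁ v₁`. On a gradient, `x · grad q` is Euler's operator
`E q = ∑ Xᵢ ∂ᵢ q`, which multiplies the coefficient of `X^d` by `|d|`. Hence `E q = 0` forces `q`
to be constant, and since `x · (p x^⊥) = 0` the two summands meet only in `0`. Conversely, for
`v ∈ (ℙ_s)²` the polynomial `x · v ∈ ℙ_{s+1}` has no constant term, so dividing its coefficients
by the degrees gives `q ∈ ℙ_{s+1}` with `E q = x · v`. The rest `w = v - grad q` satisfies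
`X₀ w₀ = -X₁ w₁`; as `X₀` is prime, `w₁ = X₀ p` and `w₀ = -X₁ p`, i.e. `w = p x^⊥`, and
`p ∈ ℙ_{s-1}` by comparing degrees.
-/

namespace MvPolynomial

variable {σ R : Type*}

section CommSemiring

variable [CommSemiring R]

theorem coeff_X_mul_pderiv (i : σ) (q : MvPolynomial σ R) (d : σ →₀ ℕ) :
    coeff d (X i * pderiv i q) = d i * coeff d q := by
  classical
  induction q using MvPolynomial.induction_on' with
  | monomial m r =>
    rw [X_mul_pderiv_monomial, coeff_smul, coeff_monomial, nsmul_eq_mul]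
    split_ifs with h <;> simp [h]
  | add p q hp hq => rw [map_add, mul_add, coeff_add, hp, hq, coeff_add, mul_add]

theorem coeff_sum_X_mul_pderiv [Fintype σ] (q : MvPolynomial σ R) (d : σ →₀ ℕ) :
    coeff d (∑ i, X i * pderiv i q) = d.degree * coeff d q := by
  simp only [coeff_sum, coeff_X_mul_pderiv, ← Finset.sum_mul, Finsupp.degree_eq_sum,
    Nat.cast_sum]

theorem totalDegree_pderiv_le (i : σ) (q : MvPolynomial σ R) :
    (pderiv i q).totalDegree ≤ q.totalDegree - 1 := by
  refine Finset.sup_le fun m hm => ?_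
  rw [mem_support_iff, coeff_pderiv] at hm
  have hle : (m + Finsupp.single i 1).degree ≤ q.totalDegree :=
    le_totalDegree (mem_support_iff.2 (left_ne_zero_of_mul hm))
  rw [map_add, Finsupp.degree_single] at hle
  change m.degree ≤ _
  omega

theorem pderiv_eq_zero_of_sum_X_mul_pderiv_eq_zero [Fintype σ] [NoZeroDivisors R] [CharZero R]
    {q : MvPolynomial σ R} (h : ∑ i, X i * pderiv i q = 0) (i : σ) : pderiv i q = 0 := by
  classical
  suffices hq : q = C (coeff 0 q) by rw [hq, pderiv_C]
  ext d
  rw [coeff_C]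
  split_ifs with hd
  · rw [hd]
  · have hcoeff := congrArg (coeff d) h
    rw [coeff_sum_X_mul_pderiv, coeff_zero] at hcoeff
    exact (mul_eq_zero.1 hcoeff).resolve_left
      (Nat.cast_ne_zero.2 ((Finsupp.degree_eq_zero_iff d).not.2 (Ne.symm hd)))

end CommSemiring

theorem exists_sum_X_mul_pderiv_eq [Fintype σ] [Field R] [CharZero R]
    (f : MvPolynomial σ R) (hf : coeff 0 f = 0) :
    ∃ q : MvPolynomial σ R, q.totalDegree ≤ f.totalDegree ∧ ∑ i, X i * pderiv i q = f := by
  classical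
  set q := ∑ d ∈ f.support, monomial d ((d.degree : R)⁻¹ * coeff d f)
  have hq : ∀ d, coeff d q = (d.degree : R)⁻¹ * coeff d f := fun d => by
    simp only [q, coeff_sum, coeff_monomial, Finset.sum_ite_eq', mem_support_iff]
    split_ifs with h
    · rfl
    · rw [not_not.1 h, mul_zero]
  refine ⟨q, totalDegree_le_of_support_subset fun d hd => ?_, ?_⟩
  · rw [mem_support_iff, hq] at hd
    exact mem_support_iff.2 (right_ne_zero_of_mul hd)
  · ext d
    rw [coeff_sum_X_mul_pderiv, hq]
    rcases eq_or_ne d 0 with rfl | hd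
    · rw [hf, mul_zero, mul_zero]
    · rw [← mul_assoc, mul_inv_cancel₀ (by simpa [Finsupp.degree_eq_zero_iff] using hd),
        one_mul]

theorem coeff_zero_sum_X_mul [Fintype σ] [CommSemiring R] (v : σ → MvPolynomial σ R) :
    coeff 0 (∑ i, X i * v i) = 0 := by
  simp [coeff_sum, ← constantCoeff_eq]

theorem X_dvd_of_X_mul_add_X_mul_eq_zero [CommRing R] [IsDomain R] {i j : σ} (hij : i ≠ j)
    {a b : MvPolynomial σ R} (h : X i * a + X j * b = 0) : X i ∣ b := by
  have hdvd : X i ∣ X j * b := ⟨-a, by linear_combination h⟩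
  exact (X_prime.dvd_or_dvd hdvd).resolve_left (X_dvd_X.not.2 hij)

end MvPolynomial

theorem gradLM_apply (q : P2) (i : Fin 2) : gradLM q i = pderiv i q := by
  fin_cases i <;> rfl

theorem xPerpMulLM_apply (p : P2) : xPerpMulLM p = ![-(X 1 * p), X 0 * p] := by
  funext i
  fin_cases i <;> rfl

theorem sum_X_mul_xPerpMulLM (p : P2) : ∑ i, X i * xPerpMulLM p i = 0 := by
  simp only [Fin.sum_univ_two, xPerpMulLM_apply, Matrix.cons_val_zero, Matrix.cons_val_one]
  ring

theorem exists_xPerpMulLM_eq {w : Fin 2 → P2} (h : ∑ i, X i * w i = 0) :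
    ∃ p, xPerpMulLM p = w := by
  rw [Fin.sum_univ_two] at h
  obtain ⟨p, hp⟩ := X_dvd_of_X_mul_add_X_mul_eq_zero (by decide) h
  refine ⟨p, funext fun i => ?_⟩
  fin_cases i
  · refine mul_left_cancel₀ (X_ne_zero (0 : Fin 2)) ?_
    simp only [xPerpMulLM_apply, Fin.zero_eta, Matrix.cons_val_zero]
    linear_combination -h + X 1 * hp
  · simp [xPerpMulLM_apply, hp]

theorem range_gradLM_inf_range_xPerpMulLM :
    LinearMap.range gradLM ⊓ LinearMap.range xPerpMulLM = ⊥ := by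
  rw [eq_bot_iff]
  rintro v ⟨⟨q, rfl⟩, p, hp⟩
  have hEuler : ∑ i, X i * pderiv i q = 0 := by
    simpa only [hp, gradLM_apply] using sum_X_mul_xPerpMulLM p
  rw [Submodule.mem_bot]
  funext i
  rw [gradLM_apply, pderiv_eq_zero_of_sum_X_mul_pderiv_eq_zero hEuler, Pi.zero_apply]

theorem mem_Pdeg2_natCast {p : P2} {n : ℕ} : p ∈ Pdeg2 n ↔ p.totalDegree ≤ n := by
  rw [Pdeg2, if_neg (by omega), Int.toNat_natCast, mem_restrictTotalDegree]

theorem mem_Ps2vec {v : Fin 2 → P2} {s : ℕ} : v ∈ Ps2vec s ↔ ∀ i, v i ∈ Pdeg2 s := by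
  simp [Ps2vec, Submodule.mem_pi]

theorem pderiv_mem_Pdeg2 {q : P2} {n : ℕ} (hq : q ∈ Pdeg2 (n + 1)) (i : Fin 2) :
    pderiv i q ∈ Pdeg2 n := by
  rw [← Nat.cast_succ, mem_Pdeg2_natCast] at hq
  rw [mem_Pdeg2_natCast]
  exact (totalDegree_pderiv_le i q).trans (by omega)

theorem X_mul_mem_Pdeg2_iff (i : Fin 2) {p : P2} {n : ℕ} :
    X i * p ∈ Pdeg2 n ↔ p ∈ Pdeg2 (n - 1) := by
  rcases eq_or_ne p 0 with rfl | hp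
  · simp only [mul_zero, zero_mem]
  rw [mem_Pdeg2_natCast, totalDegree_mul_of_isDomain (X_ne_zero i) hp, totalDegree_X, Pdeg2]
  split_ifs with hn
  · simp only [Submodule.mem_bot, hp, iff_false]
    omega
  · rw [mem_restrictTotalDegree]
    omega

theorem map_gradLM_Pdeg2_le (s : ℕ) : (Pdeg2 (s + 1)).map gradLM ≤ Ps2vec s := by
  rintro _ ⟨q, hq, rfl⟩
  exact mem_Ps2vec.2 fun i => gradLM_apply q i ▸ pderiv_mem_Pdeg2 hq i

theorem map_xPerpMulLM_Pdeg2_le (s : ℕ) : (Pdeg2 (s - 1)).map xPerpMulLM ≤ Ps2vec s := by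
  rintro _ ⟨p, hp, rfl⟩
  refine mem_Ps2vec.2 fun i => ?_
  fin_cases i
  · simpa [xPerpMulLM_apply] using (X_mul_mem_Pdeg2_iff 1).2 hp
  · simpa [xPerpMulLM_apply] using (X_mul_mem_Pdeg2_iff 0).2 hp

theorem Ps2vec_le_map_gradLM_sup_map_xPerpMulLM (s : ℕ) :
    Ps2vec s ≤ (Pdeg2 (s + 1)).map gradLM ⊔ (Pdeg2 (s - 1)).map xPerpMulLM := by
  intro v hv
  rw [mem_Ps2vec] at hv
  have hf : ∑ i, X i * v i ∈ Pdeg2 ((s + 1 : ℕ) : ℤ) :=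
    Submodule.sum_mem _ fun i _ => (X_mul_mem_Pdeg2_iff i).2 (by simpa using hv i)
  obtain ⟨q, hq_deg, hq⟩ := exists_sum_X_mul_pderiv_eq _ (coeff_zero_sum_X_mul v)
  have hq_mem : q ∈ Pdeg2 (s + 1) := by
    rw [← Nat.cast_succ, mem_Pdeg2_natCast]
    exact hq_deg.trans (mem_Pdeg2_natCast.1 hf)
  obtain ⟨p, hp⟩ := exists_xPerpMulLM_eq (w := v - gradLM q) (by
    simp only [Pi.sub_apply, mul_sub, Finset.sum_sub_distrib, gradLM_apply, hq, sub_self])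
  have hp_mem : p ∈ Pdeg2 (s - 1) := by
    refine (X_mul_mem_Pdeg2_iff 0).1 ?_
    have h1 := congrFun hp 1
    simp only [xPerpMulLM_apply, Matrix.cons_val_one, Matrix.cons_val_fin_one, Pi.sub_apply] at h1
    rw [h1, gradLM_apply]
    exact sub_mem (hv 1) (pderiv_mem_Pdeg2 hq_mem 1)
  rw [← add_sub_cancel (gradLM q) v, ← hp]
  exact Submodule.add_mem_sup (Submodule.mem_map_of_mem hq_mem) (Submodule.mem_map_of_mem hp_mem)

/-- `(ℙ_s)² = grad(ℙ_{s+1}) ⊕ x^⊥·ℙ_{s-1}` (internal direct sum). -/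
theorem stmt3 (s : ℕ) :
    (Submodule.map gradLM (Pdeg2 (s + 1))) ⊓ (Submodule.map xPerpMulLM (Pdeg2 (s - 1))) = ⊥ ∧
    (Submodule.map gradLM (Pdeg2 (s + 1))) ⊔ (Submodule.map xPerpMulLM (Pdeg2 (s - 1))) =
      Ps2vec s := by
  refine ⟨eq_bot_iff.2 ?_, le_antisymm ?_ (Ps2vec_le_map_gradLM_sup_map_xPerpMulLM s)⟩
  · rw [← range_gradLM_inf_range_xPerpMulLM]
    exact inf_le_inf LinearMap.map_le_range LinearMap.map_le_range
  · exact sup_le (map_gradLM_Pdeg2_le s) (map_xPerpMulLM_Pdeg2_le s)
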